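/- Let f, h : ℝ → ℂ be Schwartz functions. Then (1/π) ∫_{0}^{∞} k ( f̂(k) ĥ(−k) − ĥ(k) f̂(−k) ) dk = 2i ∫_ℝ f(u) h'(u) du. -/

import Mathlib

/-!
Writing `ψ k = k f̂(k) ĥ(−k)`, the integrand over `(0, ∞)` is `ψ k + ψ (−k)`, so the left side is
`(1/π) ∫_ℝ ψ`. Since `(h')^(k) = i k ĥ(k)`, we have `ψ k = i f̂(k) (h')^(−k)`, and the
Parseval-type identity `∫ f̂(k) ĝ(−k) dk = 2π ∫ f g` (self-adjointness of the Fourier transform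
plus Fourier inversion) turns `∫_ℝ ψ` into `2πi ∫ f h'`.
-/

open MeasureTheory Complex

/-- The Fourier transform `f̂(k) = ∫ f(u) e^{−iku} du` of an (integrable)
function `f : ℝ → ℂ`. -/
noncomputable def ft (f : ℝ → ℂ) (k : ℝ) : ℂ :=
  ∫ u : ℝ, f u * Complex.exp (-Complex.I * k * u)

open Real Set SchwartzMap
open scoped FourierTransform

theorem ft_eq_fourier (f : ℝ → ℂ) (k : ℝ) : ft f k = 𝓕 f (k / (2 * π)) := by
  rw [Real.fourier_real_eq_integral_exp_smul, ft]
  congr 1 with u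
  rw [smul_eq_mul, mul_comm]
  congr 2
  push_cast
  field_simp

theorem ft_deriv {f : ℝ → ℂ} (hf : Integrable f) (h'f : Differentiable ℝ f)
    (hf' : Integrable (deriv f)) (k : ℝ) : ft (deriv f) k = I * k * ft f k := by
  rw [ft_eq_fourier, ft_eq_fourier, Real.fourier_deriv hf h'f hf']
  simp only [smul_eq_mul]
  push_cast
  field_simp

theorem integral_Ioi_add_comp_neg {E : Type*} [NormedAddCommGroup E] [NormedSpace ℝ E]
    {ψ : ℝ → E} (hψ : Integrable ψ) : ∫ x in Ioi 0, (ψ x + ψ (-x)) = ∫ x, ψ x := by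
  rw [integral_add hψ.integrableOn hψ.comp_neg.integrableOn, integral_comp_neg_Ioi, neg_zero,
    add_comm, intervalIntegral.integral_Iic_add_Ioi hψ.integrableOn hψ.integrableOn]

theorem integrable_ft_mul_ft_neg (f g : 𝓢(ℝ, ℂ)) :
    Integrable fun k => ft f k * ft g (-k) := by
  have hF : Integrable fun ξ => 𝓕 f ξ * 𝓕⁻ g ξ :=
    (𝓕 f).integrable.mul_bdd (𝓕⁻ g).continuous.aestronglyMeasurable
      (.of_forall fun ξ => (𝓕⁻ g).norm_le_seminorm ℝ ξ)
  simp only [ft_eq_fourier, neg_div, ← fourierInv_eq_fourier_neg, ← fourier_coe, ← fourierInv_coe]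
  exact hF.comp_div (by positivity)

theorem integral_ft_mul_ft_neg (f g : 𝓢(ℝ, ℂ)) :
    ∫ k, ft f k * ft g (-k) = 2 * π * ∫ u, f u * g u := by
  simp only [ft_eq_fourier, neg_div, ← fourierInv_eq_fourier_neg, ← fourier_coe, ← fourierInv_coe]
  rw [Measure.integral_comp_div (fun ξ => 𝓕 f ξ * 𝓕⁻ g ξ), integral_fourier_mul_eq,
    FourierTransform.fourier_fourierInv_eq, abs_of_pos (by positivity), Complex.real_smul]
  push_cast
  rfl

/-- The antisymmetric part of the boundary two-point function reproduces the
boundary symplectic form: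
`(1/π)∫₀^∞ k (f̂(k)ĥ(−k) − ĥ(k)f̂(−k)) dk = 2i ∫ f(u) h'(u) du`. -/
theorem boundary_two_point_commutator (f h : SchwartzMap ℝ ℂ) :
    (1 / (Real.pi : ℂ)) *
      ∫ k in Set.Ioi (0 : ℝ),
        (k : ℂ) * (ft (fun u => f u) k * ft (fun u => h u) (-k) -
          ft (fun u => h u) k * ft (fun u => f u) (-k)) =
    2 * Complex.I * ∫ u : ℝ, f u * deriv (fun v : ℝ => h v) u := by
  set h' := derivCLM ℝ ℂ h
  have hh' : ⇑h' = deriv h := funext (derivCLM_apply ℝ h)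
  set ψ : ℝ → ℂ := fun k => k * (ft f k * ft h (-k))
  have hψ : ψ = fun k => I * (ft f k * ft h' (-k)) := by
    funext k
    simp only [ψ]
    rw [hh', ft_deriv h.integrable h.differentiable (hh' ▸ h'.integrable)]
    push_cast
    linear_combination (k * (ft f k * ft h (-k))) * I_sq
  have hψ_int : Integrable ψ := hψ ▸ (integrable_ft_mul_ft_neg f h').const_mul I
  calc _ = 1 / (π : ℂ) * ∫ k in Ioi 0, (ψ k + ψ (-k)) := by
        congr 2 with k
        simp only [ψ, ofReal_neg]
        rw [neg_neg]
        ring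
    _ = 1 / (π : ℂ) * (I * (2 * π * ∫ u, f u * h' u)) := by
        rw [integral_Ioi_add_comp_neg hψ_int, hψ, integral_const_mul, integral_ft_mul_ft_neg]
    _ = _ := by
        rw [hh']
        field_simp
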